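/- For every index i with 1 ≤ i ≤ n, the component φ_i is not square-integrable at the origin: ∫_0^∞ φ_i(s)² ds = ∞ (even though ∫_ε^∞ φ_i(s)² ds < ∞ for every ε > 0). -/

import Mathlib

/-!
Write `A t = (m t)⁻¹`. The identity `A a - A b = A a (m b - m a) A b` shows that `t ↦ A t i i`
is absolutely continuous on compact subintervals of `(0, ∞)`, with derivative `-(φ t i)²` at
every Lebesgue point of `f fᵀ`; hence `∫_x^y φ_i² = A x i i - A y i i` for `0 < x ≤ y`.
Since `A y` is positive semidefinite, `∫_ε^∞ φ_i² ≤ A ε i i`. On the other hand, testing the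
positive semidefinite form of `m t` at `A t eᵢ - c eᵢ` gives `A t i i ≥ 2c - c² m t i i` for every
`c`, and `m t i i → 0` as `t → 0⁺`, so `A t i i → ∞` and `∫_0^1 φ_i² = ∞`.
-/

open MeasureTheory Filter Topology Matrix Set

variable {ι : Type*}

noncomputable def gramian (f : ℝ → ι → ℝ) (t : ℝ) : Matrix ι ι ℝ :=
  Matrix.of fun j k => ∫ s in Ioc 0 t, f s j * f s k

theorem Matrix.inv_apply_self_sub_inv_apply_self {R : Type*} [CommRing R] [Fintype ι]
    [DecidableEq ι] {A B : Matrix ι ι R} (hAB : IsUnit A ↔ IsUnit B) (hB : B.IsSymm) (i : ι) :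
    A⁻¹ i i - B⁻¹ i i = ∑ j, ∑ k, A⁻¹ i j * B⁻¹ i k * (B - A) j k := by
  have h := congrFun (congrFun (inv_sub_inv hAB) i) i
  simp only [Matrix.sub_apply, mul_apply, Finset.sum_mul] at h
  rw [h, Finset.sum_comm]
  exact Finset.sum_congr rfl fun j _ => Finset.sum_congr rfl fun k _ => by
    rw [hB.inv.apply i k, Matrix.sub_apply]; ring

theorem Matrix.PosSemidef.two_mul_sub_sq_mul_le_inv_apply [Fintype ι] [DecidableEq ι]
    {M : Matrix ι ι ℝ} (hM : M.PosSemidef) (hU : IsUnit M) (i : ι) (c : ℝ) :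
    2 * c - c ^ 2 * M i i ≤ M⁻¹ i i := by
  have hdet : IsUnit M.det := (isUnit_iff_isUnit_det M).1 hU
  have hsymm : M⁻¹.IsSymm := (isHermitian_iff_isSymm.1 hM.1).inv
  -- the form of `M` at `M⁻¹ eᵢ - c eᵢ` is `M⁻¹ i i - 2c + c² M i i`
  have hq := hM.dotProduct_mulVec_nonneg (M⁻¹ *ᵥ Pi.single i 1 - c • Pi.single i 1)
  simp only [star_trivial, mulVec_sub, mulVec_smul, mulVec_mulVec, mul_nonsing_inv _ hdet,
    one_mulVec, sub_dotProduct, dotProduct_sub, smul_dotProduct, dotProduct_smul] at hq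
  simp only [mulVec_single, MulOpposite.op_one, one_smul, dotProduct_single, col_apply, mul_one,
    Pi.single_eq_same, smul_eq_mul, single_dotProduct, one_mul, sub_nonneg] at hq
  have hcol : M⁻¹.col i ⬝ᵥ M.col i = 1 := by
    have h := congrFun (congrFun (nonsing_inv_mul M hdet) i) i
    simpa [mul_apply, dotProduct, hsymm.apply i] using h
  rw [hcol] at hq
  nlinarith

theorem HasDerivAt.continuousAt_mul_of_apply_eq_zero {c g : ℝ → ℝ} {g' t : ℝ}
    (hg : HasDerivAt g g' t) (hc : ContinuousAt c t) (hg0 : g t = 0) :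
    HasDerivAt (fun u => c u * g u) (c t * g') t := by
  rw [hasDerivAt_iff_tendsto_slope] at hg ⊢
  refine ((hc.tendsto.mono_left nhdsWithin_le_nhds).mul hg).congr fun u => ?_
  simp only [slope_def_field, hg0, mul_zero, sub_zero, mul_div_assoc]

theorem AbsolutelyContinuousOnInterval.of_dist_le_sum {X Y κ : Type*} [PseudoMetricSpace X]
    [PseudoMetricSpace Y] [Fintype κ] {g : ℝ → X} {h : κ → ℝ → Y} {a b : ℝ} (C : ℝ)
    (hh : ∀ l, AbsolutelyContinuousOnInterval (h l) a b)
    (hgh : ∀ u ∈ uIcc a b, ∀ v ∈ uIcc a b, dist (g u) (g v) ≤ C * ∑ l, dist (h l u) (h l v)) :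
    AbsolutelyContinuousOnInterval g a b := by
  have hlim : Tendsto (fun E : ℕ × (ℕ → ℝ × ℝ) =>
      C * ∑ l, ∑ i ∈ Finset.range E.1, dist (h l (E.2 i).1) (h l (E.2 i).2))
      (AbsolutelyContinuousOnInterval.totalLengthFilter ⊓
        𝓟 (AbsolutelyContinuousOnInterval.disjWithin a b)) (𝓝 0) := by
    simpa using (tendsto_finsetSum _ fun l _ => hh l).const_mul C
  refine squeeze_zero' (.of_forall fun E => Finset.sum_nonneg fun _ _ => dist_nonneg) ?_ hlim
  filter_upwards [mem_inf_of_right (mem_principal_self _)] with E hE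
  rw [Finset.sum_comm, Finset.mul_sum]
  exact Finset.sum_le_sum fun i hi => hgh _ (hE.1 i hi).1 _ (hE.1 i hi).2

namespace gramian

variable {f : ℝ → ι → ℝ}

theorem integrableOn_mul
    (hf : ∀ i, ∀ t > 0, MemLp (fun s => f s i) 2 (volume.restrict (Ioc 0 t)))
    (j k : ι) {t : ℝ} (ht : 0 < t) : IntegrableOn (fun s => f s j * f s k) (Ioc 0 t) :=
  (hf j t ht).integrable_mul (hf k t ht)

theorem intervalIntegrable_mul
    (hf : ∀ i, ∀ t > 0, MemLp (fun s => f s i) 2 (volume.restrict (Ioc 0 t)))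
    (j k : ι) {a b : ℝ} (ha : 0 ≤ a) (hb : 0 ≤ b) :
    IntervalIntegrable (fun s => f s j * f s k) volume a b := by
  rw [intervalIntegrable_iff, uIoc]
  refine (integrableOn_mul hf j k (lt_max_of_lt_right zero_lt_one :
    (0 : ℝ) < max (max a b) 1)).mono_set (Ioc_subset_Ioc (le_min ha hb) (le_max_left _ _))

theorem apply_eq_intervalIntegral {t : ℝ} (ht : 0 ≤ t) (j k : ι) :
    gramian f t j k = ∫ s in 0..t, f s j * f s k := by
  rw [intervalIntegral.integral_of_le ht, gramian, of_apply]

theorem apply_sub_apply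
    (hf : ∀ i, ∀ t > 0, MemLp (fun s => f s i) 2 (volume.restrict (Ioc 0 t)))
    (j k : ι) {a b : ℝ} (ha : 0 ≤ a) (hb : 0 ≤ b) :
    gramian f b j k - gramian f a j k = ∫ s in a..b, f s j * f s k := by
  rw [apply_eq_intervalIntegral hb, apply_eq_intervalIntegral ha,
    intervalIntegral.integral_interval_sub_left (intervalIntegrable_mul hf j k le_rfl hb)
      (intervalIntegrable_mul hf j k le_rfl ha)]

theorem isSymm (t : ℝ) : (gramian f t).IsSymm :=
  .ext fun j k => by simp only [gramian, of_apply, mul_comm]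

theorem dotProduct_mulVec_self [Fintype ι]
    (hf : ∀ i, ∀ t > 0, MemLp (fun s => f s i) 2 (volume.restrict (Ioc 0 t)))
    {t : ℝ} (ht : 0 < t) (v : ι → ℝ) :
    v ⬝ᵥ (gramian f t *ᵥ v) = ∫ s in Ioc 0 t, (v ⬝ᵥ f s) ^ 2 := by
  have hint : ∀ j k, IntegrableOn (fun s => v j * v k * (f s j * f s k)) (Ioc 0 t) :=
    fun j k => (integrableOn_mul hf j k ht).const_mul _
  have hexpand : ∀ s, (v ⬝ᵥ f s) ^ 2 = ∑ j, ∑ k, v j * v k * (f s j * f s k) := fun s => by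
    simp only [sq, dotProduct, Finset.sum_mul_sum]
    exact Finset.sum_congr rfl fun j _ => Finset.sum_congr rfl fun k _ => by ring
  simp_rw [hexpand]
  rw [integral_finsetSum _ fun j _ => integrable_finsetSum _ fun k _ => hint j k]
  simp only [dotProduct, mulVec, Finset.mul_sum]
  refine Finset.sum_congr rfl fun j _ => ?_
  rw [integral_finsetSum _ fun k _ => hint j k]
  refine Finset.sum_congr rfl fun k _ => ?_
  rw [integral_const_mul, gramian, of_apply]
  ring

theorem posSemidef [Fintype ι]
    (hf : ∀ i, ∀ t > 0, MemLp (fun s => f s i) 2 (volume.restrict (Ioc 0 t)))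
    {t : ℝ} (ht : 0 < t) : (gramian f t).PosSemidef :=
  .of_dotProduct_mulVec_nonneg (isHermitian_iff_isSymm.2 (isSymm t)) fun v => by
    rw [star_trivial, dotProduct_mulVec_self hf ht]
    exact setIntegral_nonneg measurableSet_Ioc fun s _ => sq_nonneg _

theorem continuousAt_apply
    (hf : ∀ i, ∀ t > 0, MemLp (fun s => f s i) 2 (volume.restrict (Ioc 0 t)))
    (j k : ι) {t : ℝ} (ht : 0 < t) : ContinuousAt (fun u => gramian f u j k) t := by
  have hprim := intervalIntegral.continuousOn_primitive_interval'
    (intervalIntegrable_mul hf j k le_rfl (by linarith : (0 : ℝ) ≤ t + 1)) left_mem_uIcc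
  have hnhds : uIcc 0 (t + 1) ∈ 𝓝 t := by
    rw [uIcc_of_le (by linarith)]; exact Icc_mem_nhds ht (by linarith)
  refine (hprim.continuousAt hnhds).congr ?_
  filter_upwards [Ioi_mem_nhds ht] with u hu
  exact (apply_eq_intervalIntegral (le_of_lt hu) j k).symm

theorem tendsto_apply_self_nhdsGT_zero
    (hf : ∀ i, ∀ t > 0, MemLp (fun s => f s i) 2 (volume.restrict (Ioc 0 t))) (i : ι) :
    Tendsto (fun t => gramian f t i i) (𝓝[>] 0) (𝓝 0) := by
  have hprim := intervalIntegral.continuousOn_primitive_interval'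
    (intervalIntegrable_mul hf i i le_rfl zero_le_one) left_mem_uIcc
  have hcont := (hprim 0 left_mem_uIcc).tendsto
  rw [intervalIntegral.integral_same] at hcont
  refine (hcont.mono_left (nhdsWithin_le_of_mem ?_)).congr' ?_
  · rw [uIcc_of_le zero_le_one]
    exact Icc_mem_nhdsGT zero_lt_one
  · filter_upwards [self_mem_nhdsWithin] with t ht
    exact (apply_eq_intervalIntegral (le_of_lt ht) i i).symm

variable [Fintype ι] [DecidableEq ι]

theorem continuousAt_inv
    (hf : ∀ i, ∀ t > 0, MemLp (fun s => f s i) 2 (volume.restrict (Ioc 0 t)))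
    (hinv : ∀ t > 0, IsUnit (gramian f t)) {t : ℝ} (ht : 0 < t) :
    ContinuousAt (fun u => (gramian f u)⁻¹) t := by
  have hdet : IsUnit (gramian f t).det := (isUnit_iff_isUnit_det _).1 (hinv t ht)
  refine (continuousAt_matrix_inv _ (NormedRing.inverse_continuousAt hdet.unit)).comp ?_
  exact continuousAt_pi.2 fun j => continuousAt_pi.2 fun k => continuousAt_apply hf j k ht

theorem inv_apply_self_sub_inv_apply_self
    (hf : ∀ i, ∀ t > 0, MemLp (fun s => f s i) 2 (volume.restrict (Ioc 0 t)))
    (hinv : ∀ t > 0, IsUnit (gramian f t)) (i : ι) {a b : ℝ} (ha : 0 < a) (hb : 0 < b) :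
    (gramian f a)⁻¹ i i - (gramian f b)⁻¹ i i
      = ∑ j, ∑ k, (gramian f a)⁻¹ i j * (gramian f b)⁻¹ i k * ∫ s in a..b, f s j * f s k := by
  rw [Matrix.inv_apply_self_sub_inv_apply_self (iff_of_true (hinv a ha) (hinv b hb)) (isSymm b)]
  simp only [Matrix.sub_apply, apply_sub_apply hf _ _ ha.le hb.le]

theorem hasDerivAt_inv_apply_self
    (hf : ∀ i, ∀ t > 0, MemLp (fun s => f s i) 2 (volume.restrict (Ioc 0 t)))
    (hinv : ∀ t > 0, IsUnit (gramian f t)) (i : ι) {t : ℝ} (ht : 0 < t)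
    (hderiv : ∀ j k, HasDerivAt (fun u => ∫ s in t..u, f s j * f s k) (f t j * f t k) t) :
    HasDerivAt (fun u => (gramian f u)⁻¹ i i) (-((gramian f t)⁻¹ *ᵥ f t) i ^ 2) t := by
  have hA : ∀ k, ContinuousAt (fun u => (gramian f u)⁻¹ i k) t := fun k =>
    (continuous_id.matrix_elem i k).continuousAt.comp (continuousAt_inv hf hinv ht)
  -- near `t`, `A u` enters only through products with increments of `m` vanishing at `t`,
  -- so continuity of `A` at `t` suffices
  have hrhs : HasDerivAt (fun u => (gramian f t)⁻¹ i i - ∑ j, ∑ k,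
        (gramian f t)⁻¹ i j * ((gramian f u)⁻¹ i k * ∫ s in t..u, f s j * f s k))
      (0 - ∑ j, ∑ k, (gramian f t)⁻¹ i j * ((gramian f t)⁻¹ i k * (f t j * f t k))) t :=
    (hasDerivAt_const t _).sub <| .fun_sum fun j _ => .fun_sum fun k _ =>
      ((hderiv j k).continuousAt_mul_of_apply_eq_zero (hA k)
        intervalIntegral.integral_same).const_mul _
  refine (hrhs.congr_of_eventuallyEq ?_).congr_deriv ?_
  · filter_upwards [Ioi_mem_nhds ht] with u hu
    have hsub := inv_apply_self_sub_inv_apply_self hf hinv i ht hu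
    simp only [mul_assoc] at hsub
    linarith
  · simp only [mulVec, dotProduct, sq, Finset.sum_mul_sum, zero_sub]
    exact congrArg Neg.neg (Finset.sum_congr rfl fun j _ => Finset.sum_congr rfl fun k _ => by
      ring)

theorem absolutelyContinuousOnInterval_inv_apply_self
    (hf : ∀ i, ∀ t > 0, MemLp (fun s => f s i) 2 (volume.restrict (Ioc 0 t)))
    (hinv : ∀ t > 0, IsUnit (gramian f t)) (i : ι) {x y : ℝ} (hx : 0 < x) (hy : 0 < y) :
    AbsolutelyContinuousOnInterval (fun u => (gramian f u)⁻¹ i i) x y := by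
  have hpos : ∀ u ∈ uIcc x y, 0 < u := fun u hu => lt_of_lt_of_le (lt_min hx hy) hu.1
  obtain ⟨K, hK⟩ := isCompact_uIcc.exists_bound_of_continuousOn fun u hu =>
    ((continuous_apply i).continuousAt.comp (continuousAt_inv hf hinv (hpos u hu))
      ).continuousWithinAt
  refine .of_dist_le_sum (h := fun (l : ι × ι) u => ∫ s in x..u, f s l.1 * f s l.2) (K ^ 2)
    (fun l => (intervalIntegrable_mul hf l.1 l.2 hx.le hy.le
      ).absolutelyContinuousOnInterval_intervalIntegral left_mem_uIcc) fun u hu v hv => ?_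
  have hrow : ∀ w ∈ uIcc x y, ∀ j, |(gramian f w)⁻¹ i j| ≤ K := fun w hw j =>
    (norm_le_pi_norm ((gramian f w)⁻¹ i) j).trans (hK w hw)
  rw [Real.dist_eq, inv_apply_self_sub_inv_apply_self hf hinv i (hpos u hu) (hpos v hv),
    Fintype.sum_prod_type, Finset.mul_sum]
  refine (Finset.abs_sum_le_sum_abs _ _).trans (Finset.sum_le_sum fun j _ => ?_)
  rw [Finset.mul_sum]
  refine (Finset.abs_sum_le_sum_abs _ _).trans (Finset.sum_le_sum fun k _ => ?_)
  rw [dist_comm, Real.dist_eq, intervalIntegral.integral_interval_sub_left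
    (intervalIntegrable_mul hf j k hx.le (hpos v hv).le)
    (intervalIntegrable_mul hf j k hx.le (hpos u hu).le), abs_mul, abs_mul, sq]
  have hK0 : 0 ≤ K := (abs_nonneg _).trans (hrow u hu j)
  gcongr
  exacts [hrow u hu j, hrow v hv k]

theorem ae_hasDerivAt_inv_apply_self
    (hf : ∀ i, ∀ t > 0, MemLp (fun s => f s i) 2 (volume.restrict (Ioc 0 t)))
    (hinv : ∀ t > 0, IsUnit (gramian f t)) (i : ι) {x y : ℝ} (hx : 0 < x) (hy : 0 < y) :
    ∀ᵐ t, t ∈ uIcc x y →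
      HasDerivAt (fun u => (gramian f u)⁻¹ i i) (-((gramian f t)⁻¹ *ᵥ f t) i ^ 2) t := by
  have hleb := ae_all_iff.2 fun l : ι × ι =>
    (intervalIntegrable_mul hf l.1 l.2 hx.le hy.le).ae_hasDerivAt_integral
  filter_upwards [hleb] with t ht htxy
  exact hasDerivAt_inv_apply_self hf hinv i (lt_of_lt_of_le (lt_min hx hy) htxy.1)
    fun j k => ht (j, k) htxy t htxy

theorem intervalIntegrable_sq_inv_mulVec
    (hf : ∀ i, ∀ t > 0, MemLp (fun s => f s i) 2 (volume.restrict (Ioc 0 t)))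
    (hinv : ∀ t > 0, IsUnit (gramian f t)) (i : ι) {x y : ℝ} (hx : 0 < x) (hy : 0 < y) :
    IntervalIntegrable (fun s => ((gramian f s)⁻¹ *ᵥ f s) i ^ 2) volume x y := by
  have hderiv := (absolutelyContinuousOnInterval_inv_apply_self hf hinv i hx hy
    ).intervalIntegrable_deriv.neg
  rw [intervalIntegrable_iff] at hderiv ⊢
  refine hderiv.congr_fun_ae ((ae_restrict_iff' measurableSet_uIoc).2 ?_)
  filter_upwards [ae_hasDerivAt_inv_apply_self hf hinv i hx hy] with t ht hmem
  simp [(ht (uIoc_subset_uIcc hmem)).deriv]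

theorem intervalIntegral_sq_inv_mulVec
    (hf : ∀ i, ∀ t > 0, MemLp (fun s => f s i) 2 (volume.restrict (Ioc 0 t)))
    (hinv : ∀ t > 0, IsUnit (gramian f t)) (i : ι) {x y : ℝ} (hx : 0 < x) (hy : 0 < y) :
    ∫ s in x..y, ((gramian f s)⁻¹ *ᵥ f s) i ^ 2 = (gramian f x)⁻¹ i i - (gramian f y)⁻¹ i i := by
  have hftc :=
    (absolutelyContinuousOnInterval_inv_apply_self hf hinv i hx hy).integral_deriv_eq_sub
  rw [intervalIntegral.integral_congr_ae (g := fun s => -((gramian f s)⁻¹ *ᵥ f s) i ^ 2) ?_,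
    intervalIntegral.integral_neg] at hftc
  · linarith
  filter_upwards [ae_hasDerivAt_inv_apply_self hf hinv i hx hy] with t ht hmem
  exact (ht (uIoc_subset_uIcc hmem)).deriv

theorem tendsto_inv_apply_self_nhdsGT_zero
    (hf : ∀ i, ∀ t > 0, MemLp (fun s => f s i) 2 (volume.restrict (Ioc 0 t)))
    (hinv : ∀ t > 0, IsUnit (gramian f t)) (i : ι) :
    Tendsto (fun t => (gramian f t)⁻¹ i i) (𝓝[>] 0) atTop := by
  refine tendsto_atTop.2 fun B => ?_
  set c := max B 0 + 1
  have hc : 0 < c := by positivity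
  filter_upwards [(tendsto_apply_self_nhdsGT_zero hf i).eventually (gt_mem_nhds (inv_pos.2 hc)),
    self_mem_nhdsWithin] with t hsmall ht
  have hlow := (posSemidef hf ht).two_mul_sub_sq_mul_le_inv_apply (hinv t ht) i c
  have : c ^ 2 * gramian f t i i < c := by
    calc c ^ 2 * gramian f t i i < c ^ 2 * c⁻¹ := by gcongr
      _ = c := by field_simp
  have : B < c := by linarith [le_max_left B 0]
  linarith

theorem integrableOn_Ioi_sq_inv_mulVec
    (hf : ∀ i, ∀ t > 0, MemLp (fun s => f s i) 2 (volume.restrict (Ioc 0 t)))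
    (hinv : ∀ t > 0, IsUnit (gramian f t)) (i : ι) {ε : ℝ} (hε : 0 < ε) :
    IntegrableOn (fun s => ((gramian f s)⁻¹ *ᵥ f s) i ^ 2) (Ioi ε) := by
  have hpos : ∀ k : ℕ, 0 < ε + k := fun k => by positivity
  refine integrableOn_Ioi_of_intervalIntegral_norm_bounded ((gramian f ε)⁻¹ i i) ε
    (fun k => (intervalIntegrable_sq_inv_mulVec hf hinv i hε (hpos k)).1)
    (tendsto_atTop_add_const_left _ ε tendsto_natCast_atTop_atTop) (.of_forall fun k => ?_)
  simp only [norm_pow, Real.norm_eq_abs, sq_abs]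
  rw [intervalIntegral_sq_inv_mulVec hf hinv i hε (hpos k)]
  linarith [(posSemidef hf (hpos k)).inv.diag_nonneg (i := i)]

theorem not_integrableOn_Ioi_zero_sq_inv_mulVec
    (hf : ∀ i, ∀ t > 0, MemLp (fun s => f s i) 2 (volume.restrict (Ioc 0 t)))
    (hinv : ∀ t > 0, IsUnit (gramian f t)) (i : ι) :
    ¬ IntegrableOn (fun s => ((gramian f s)⁻¹ *ᵥ f s) i ^ 2) (Ioi 0) := by
  intro hint
  have hbound : ∀ t ∈ Ioc 0 1, (gramian f t)⁻¹ i i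
      ≤ (gramian f 1)⁻¹ i i + ∫ s in Ioi 0, ((gramian f s)⁻¹ *ᵥ f s) i ^ 2 := fun t ht => by
    have hftc := intervalIntegral_sq_inv_mulVec hf hinv i ht.1 one_pos
    rw [intervalIntegral.integral_of_le ht.2] at hftc
    have hmono := setIntegral_mono_set hint (.of_forall fun s => sq_nonneg _)
      (Ioc_subset_Ioi_self.trans (Ioi_subset_Ioi ht.1.le) : Ioc t 1 ⊆ Ioi 0).eventuallyLE
    linarith
  obtain ⟨t, hbig, ht⟩ := (((tendsto_inv_apply_self_nhdsGT_zero hf hinv i).eventually_gt_atTop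
    ((gramian f 1)⁻¹ i i + ∫ s in Ioi 0, ((gramian f s)⁻¹ *ᵥ f s) i ^ 2)).and
    (Ioc_mem_nhdsGT one_pos)).exists
  exact (hbound t ht).not_gt hbig

end gramian

theorem phi_not_square_integrable_at_origin_general
    (n : ℕ)
    (f : ℝ → Fin n → ℝ)
    (hf_meas : ∀ i, Measurable fun s => f s i)
    (hf_loc : ∀ i, ∀ t > (0 : ℝ), IntegrableOn (fun s => (f s i) ^ 2) (Set.Ioc 0 t))
    (m : ℝ → Matrix (Fin n) (Fin n) ℝ)
    (hm : ∀ t, m t = Matrix.of fun i j => ∫ s in Set.Ioc 0 t, f s i * f s j)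
    (hm_inv : ∀ t > (0 : ℝ), IsUnit (m t))
    (α : ℝ → Matrix (Fin n) (Fin n) ℝ)
    (hα : ∀ t, α t = (m t)⁻¹)
    (φ : ℝ → Fin n → ℝ)
    (hφ : ∀ t, φ t = (α t).mulVec (f t)) :
    ∀ i : Fin n,
      ¬ IntegrableOn (fun s => (φ s i) ^ 2) (Set.Ioi 0) ∧
      ∀ ε > (0 : ℝ), IntegrableOn (fun s => (φ s i) ^ 2) (Set.Ioi ε) := by
  obtain rfl : m = gramian f := funext hm
  obtain rfl : α = fun t => (gramian f t)⁻¹ := funext hα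
  obtain rfl : φ = fun t => (gramian f t)⁻¹ *ᵥ f t := funext hφ
  have hf : ∀ i, ∀ t > 0, MemLp (fun s => f s i) 2 (volume.restrict (Ioc 0 t)) := fun i t ht =>
    (memLp_two_iff_integrable_sq (hf_meas i).aestronglyMeasurable).2 (hf_loc i t ht)
  exact fun i => ⟨gramian.not_integrableOn_Ioi_zero_sq_inv_mulVec hf hm_inv i,
    fun ε hε => gramian.integrableOn_Ioi_sq_inv_mulVec hf hm_inv i hε⟩

/-- For every index i, the component φ_i is not square-integrable at the origin:
∫_0^∞ φ_i(s)² ds = ∞, even though ∫_ε^∞ φ_i(s)² ds < ∞ for every ε > 0. -/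
theorem phi_not_square_integrable_at_origin
    (n : ℕ) (hn : 1 ≤ n)
    (f : ℝ → Fin n → ℝ)
    (hf_meas : ∀ i, Measurable fun s => f s i)
    (hf_loc : ∀ i, ∀ t > (0 : ℝ), IntegrableOn (fun s => (f s i) ^ 2) (Set.Ioc 0 t))
    (m : ℝ → Matrix (Fin n) (Fin n) ℝ)
    (hm : ∀ t, m t = Matrix.of fun i j => ∫ s in Set.Ioc 0 t, f s i * f s j)
    (hm_inv : ∀ t > (0 : ℝ), IsUnit (m t))
    (α : ℝ → Matrix (Fin n) (Fin n) ℝ)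
    (hα : ∀ t, α t = (m t)⁻¹)
    (φ : ℝ → Fin n → ℝ)
    (hφ : ∀ t, φ t = (α t).mulVec (f t)) :
    ∀ i : Fin n,
      ¬ IntegrableOn (fun s => (φ s i) ^ 2) (Set.Ioi 0) ∧
      ∀ ε > (0 : ℝ), IntegrableOn (fun s => (φ s i) ^ 2) (Set.Ioi ε) :=
  phi_not_square_integrable_at_origin_general n f hf_meas hf_loc m hm hm_inv α hα φ hφ
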